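/- arXiv:1807.08021 — 6 statements merged into one kernel-verified Lean document; each statement's English description precedes it below -/
import Mathlib

section
/- Let ℓ₁,...,ℓ_s ∈ K[x₁,x₂] with ℓ₁ = x₁ and ℓᵢ = x₁ + λᵢx₂ for i = 2,...,s, where the λᵢ ∈ K are nonzero and pairwise distinct (s ≥ 3). Then the vectors c_{1,u,v} for 2 ≤ u < v ≤ s form a linearly independent set in K^{C(s,2)}, and the span of all coefficient vectors of 3-dependencies among ℓ₁,...,ℓ_s has dimension C(s−1, 2). -/
open MvPolynomial Finset

/-- The coefficient vector of a 3-dependency `c_a ℓ_a + c_b ℓ_b + c_c ℓ_c = 0` (with `a < b < c`)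
in `K^(s×s)`: entry `c_c` at position `(a,b)`, `c_b` at `(a,c)`, `c_a` at `(b,c)`, 0 elsewhere. -/
def cvec {K : Type*} [Field K] {s : ℕ} (a b c : Fin s) (ca cb cc : K) :
    Fin s × Fin s → K := fun p =>
  if p = (a, b) then cc else if p = (a, c) then cb else if p = (b, c) then ca else 0

/-!
Put `μ 0 = 0` and `μ i = λᵢ` otherwise, so that `ℓᵢ = x₁ + μᵢ x₂` for every `i`. A relation
`c_a ℓ_a + c_b ℓ_b + c_c ℓ_c = 0` says that `(c_a, c_b, c_c)` is orthogonal to `(1, 1, 1)` and to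
`(μ_a, μ_b, μ_c)`; since `μ` is injective it is a multiple of `(μ_b - μ_c, μ_c - μ_a, μ_a - μ_b)`.
Writing `d_{abc}` (`depVec μ a b c`) for the coefficient vector of that relation, the identity
`d_{abc} = d_{0ab} - d_{0ac} + d_{0bc}` shows that the `d_{0uv}` span all of them, and they are
independent because `d_{0uv}` is the only one with a nonzero entry at `(u, v)`.
-/

open Submodule Function

lemma injective_update_zero {ι M : Type*} [DecidableEq ι] [Zero M] {f : ι → M} {i₀ : ι}
    (hf : ∀ i, i ≠ i₀ → f i ≠ 0) (hinj : ∀ i j, i ≠ i₀ → j ≠ i₀ → i ≠ j → f i ≠ f j) :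
    Injective (update f i₀ 0) := by
  intro i j hij
  by_contra hne
  rcases eq_or_ne i i₀ with hi | hi <;> rcases eq_or_ne j i₀ with hj | hj
  · exact hne (hi.trans hj.symm)
  · subst hi
    rw [update_self, update_of_ne hj] at hij
    exact hf j hj hij.symm
  · subst hj
    rw [update_self, update_of_ne hi] at hij
    exact hf i hi hij
  · rw [update_of_ne hi, update_of_ne hj] at hij
    exact hinj i j hi hj hne hij

section
variable {K : Type*} [Field K] {s : ℕ}

def depVec (μ : Fin s → K) (a b c : Fin s) : Fin s × Fin s → K :=
  cvec a b c (μ b - μ c) (μ c - μ a) (μ a - μ b)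

def dependencyVectors (ℓ : Fin s → MvPolynomial (Fin 2) K) : Set (Fin s × Fin s → K) :=
  {x | ∃ a b c : Fin s, a < b ∧ b < c ∧
    ∃ ca cb cc : K, ca ≠ 0 ∧ cb ≠ 0 ∧ cc ≠ 0 ∧
      ca • ℓ a + cb • ℓ b + cc • ℓ c = 0 ∧ x = cvec a b c ca cb cc}

lemma cvec_smul (a b c : Fin s) (ca cb cc t : K) :
    t • cvec a b c ca cb cc = cvec a b c (t * ca) (t * cb) (t * cc) := by
  funext p
  simp only [cvec, Pi.smul_apply, smul_eq_mul]
  split_ifs <;> ring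

variable {μ : Fin s → K} {ℓ : Fin s → MvPolynomial (Fin 2) K}

lemma smul_add_smul_add_smul_eq_zero_iff (hℓ : ∀ i, ℓ i = X 0 + μ i • X 1) {a b c : Fin s}
    {ca cb cc : K} :
    ca • ℓ a + cb • ℓ b + cc • ℓ c = 0 ↔
      ca + cb + cc = 0 ∧ ca * μ a + cb * μ b + cc * μ c = 0 := by
  have hsum : ca • ℓ a + cb • ℓ b + cc • ℓ c
      = ∑ i : Fin 2,
          ![ca + cb + cc, ca * μ a + cb * μ b + cc * μ c] i • (X i : MvPolynomial (Fin 2) K) := by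
    simp only [hℓ, Fin.sum_univ_two, Matrix.cons_val_zero, Matrix.cons_val_one,
      Matrix.cons_val_fin_one]
    module
  rw [hsum]
  constructor
  · intro h
    have := Fintype.linearIndependent_iff.mp (linearIndependent_X (Fin 2) K) _ h
    exact ⟨this 0, this 1⟩
  · rintro ⟨h1, h2⟩
    simp [Fin.sum_univ_two, h1, h2]

lemma cvec_eq_smul_depVec {a b c : Fin s} {ca cb cc : K} (h1 : ca + cb + cc = 0)
    (h2 : ca * μ a + cb * μ b + cc * μ c = 0) (hbc : μ b ≠ μ c) :
    cvec a b c ca cb cc = (ca / (μ b - μ c)) • depVec μ a b c := by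
  have hd : μ b - μ c ≠ 0 := sub_ne_zero.mpr hbc
  rw [depVec, cvec_smul]
  congr 1
  · field_simp
  · field_simp
    linear_combination h2 - μ c * h1
  · field_simp
    linear_combination μ b * h1 - h2

lemma depVec_eq_sub_add {o a b c : Fin s} (hoa : o ≠ a) (hob : o ≠ b)
    (hab : a ≠ b) (hac : a ≠ c) (hbc : b ≠ c) :
    depVec μ a b c = depVec μ o a b - depVec μ o a c + depVec μ o b c := by
  funext p
  simp only [depVec, cvec, Pi.add_apply, Pi.sub_apply]
  split_ifs <;> first | ring1 | (exfalso; simp_all [Prod.ext_iff])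

lemma depVec_mem_dependencyVectors (hℓ : ∀ i, ℓ i = X 0 + μ i • X 1) (hμ : Injective μ)
    {a b c : Fin s} (hab : a < b) (hbc : b < c) : depVec μ a b c ∈ dependencyVectors ℓ := by
  refine ⟨a, b, c, hab, hbc, _, _, _, sub_ne_zero.mpr (hμ.ne hbc.ne),
    sub_ne_zero.mpr (hμ.ne (hab.trans hbc).ne'), sub_ne_zero.mpr (hμ.ne hab.ne), ?_, rfl⟩
  rw [smul_add_smul_add_smul_eq_zero_iff hℓ]
  constructor <;> ring

variable [NeZero s]

theorem span_dependencyVectors (hℓ : ∀ i, ℓ i = X 0 + μ i • X 1) (hμ : Injective μ) :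
    span K (dependencyVectors ℓ) = span K (Set.range
      fun p : {p : Fin s × Fin s // 0 < p.1 ∧ p.1 < p.2} => depVec μ 0 p.1.1 p.1.2) := by
  have hgen : ∀ {b c : Fin s}, 0 < b → b < c → depVec μ 0 b c ∈ span K (Set.range
      fun p : {p : Fin s × Fin s // 0 < p.1 ∧ p.1 < p.2} => depVec μ 0 p.1.1 p.1.2) :=
    fun hb hbc => subset_span ⟨⟨(_, _), hb, hbc⟩, rfl⟩
  apply le_antisymm
  · rw [span_le]
    rintro x ⟨a, b, c, hab, hbc, ca, cb, cc, -, -, -, hdep, rfl⟩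
    obtain ⟨h1, h2⟩ := (smul_add_smul_add_smul_eq_zero_iff hℓ).mp hdep
    rw [cvec_eq_smul_depVec h1 h2 (hμ.ne hbc.ne)]
    refine smul_mem _ _ ?_
    rcases (Fin.zero_le a).eq_or_lt with rfl | ha
    · exact hgen hab hbc
    · rw [depVec_eq_sub_add (o := 0) ha.ne (ha.trans hab).ne hab.ne (hab.trans hbc).ne hbc.ne]
      exact add_mem (sub_mem (hgen ha hab) (hgen ha (hab.trans hbc))) (hgen (ha.trans hab) hbc)
  · rw [span_le]
    rintro x ⟨p, rfl⟩
    exact subset_span (depVec_mem_dependencyVectors hℓ hμ p.2.1 p.2.2)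

lemma depVec_zero_apply_of_pos (u v : Fin s) {q : Fin s × Fin s} (hq : 0 < q.1) :
    depVec μ 0 u v q = if q = (u, v) then μ u - μ v else 0 := by
  simp [depVec, cvec, Prod.ext_iff, hq.ne']

theorem linearIndependent_depVec (hμ : Injective μ) :
    LinearIndependent K
      fun p : {p : Fin s × Fin s // 0 < p.1 ∧ p.1 < p.2} => depVec μ 0 p.1.1 p.1.2 := by
  apply LinearIndependent.of_comp (LinearMap.funLeft K K Subtype.val)
  have hdiag : LinearMap.funLeft K K Subtype.val ∘
      (fun p : {p : Fin s × Fin s // 0 < p.1 ∧ p.1 < p.2} => depVec μ 0 p.1.1 p.1.2)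
      = fun p => (μ p.1.1 - μ p.1.2) • Pi.single p 1 := by
    funext p q
    simp [depVec_zero_apply_of_pos _ _ q.2.1, Pi.single_apply, Subtype.ext_iff, eq_comm]
  rw [hdiag]
  exact (Pi.linearIndependent_single_one _ K).units_smul
    fun p => Units.mk0 _ (sub_ne_zero.mpr (hμ.ne p.2.2.ne))

end

lemma card_subtype_zero_lt_lt {s : ℕ} [NeZero s] :
    Fintype.card {p : Fin s × Fin s // 0 < p.1 ∧ p.1 < p.2} = (s - 1).choose 2 := by
  rw [Fintype.card_subtype]
  have : ({p | 0 < p.1 ∧ p.1 < p.2} : Finset (Fin s × Fin s))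
      = {p ∈ Ioi (0 : Fin s) ×ˢ Ioi (0 : Fin s) | p.1 < p.2} := by
    ext p
    simp only [mem_filter, mem_univ, true_and, mem_product, mem_Ioi]
    exact ⟨fun h => ⟨⟨h.1, h.1.trans h.2⟩, h.2⟩, fun h => ⟨h.1.1, h.2⟩⟩
  rw [this, card_product_filter_lt, Fin.card_Ioi, Fin.val_zero, Nat.sub_zero]

theorem stmt3_general {K : Type*} [Field K] {s : ℕ} [NeZero s]
    (lam : Fin s → K) (hlam : ∀ i : Fin s, i ≠ 0 → lam i ≠ 0)
    (hdist : ∀ i j : Fin s, i ≠ 0 → j ≠ 0 → i ≠ j → lam i ≠ lam j)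
    (ℓ : Fin s → MvPolynomial (Fin 2) K)
    (hℓ0 : ℓ 0 = X 0)
    (hℓ : ∀ i : Fin s, i ≠ 0 → ℓ i = X 0 + lam i • X 1) :
    LinearIndependent K
      (fun p : {p : Fin s × Fin s // 0 < p.1 ∧ p.1 < p.2} =>
        cvec 0 p.val.1 p.val.2 (lam p.val.1 - lam p.val.2) (lam p.val.2) (-(lam p.val.1)))
    ∧ Module.finrank K (Submodule.span K
        {x : Fin s × Fin s → K | ∃ a b c : Fin s, a < b ∧ b < c ∧
          ∃ ca cb cc : K, ca ≠ 0 ∧ cb ≠ 0 ∧ cc ≠ 0 ∧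
            ca • ℓ a + cb • ℓ b + cc • ℓ c = 0 ∧ x = cvec a b c ca cb cc})
      = (s - 1).choose 2 := by
  set μ := update lam 0 0
  have hμ : Injective μ := injective_update_zero hlam hdist
  have hℓμ : ∀ i, ℓ i = X 0 + μ i • X 1 := by
    intro i
    rcases eq_or_ne i 0 with rfl | hi
    · simp [μ, hℓ0]
    · simp [μ, hi, hℓ i hi]
  have hfamily : (fun p : {p : Fin s × Fin s // 0 < p.1 ∧ p.1 < p.2} =>
      cvec 0 p.val.1 p.val.2 (lam p.val.1 - lam p.val.2) (lam p.val.2) (-(lam p.val.1)))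
      = fun p => depVec μ 0 p.1.1 p.1.2 := by
    funext p
    simp [depVec, μ, p.2.1.ne', (p.2.1.trans p.2.2).ne']
  rw [hfamily]
  refine ⟨linearIndependent_depVec hμ, ?_⟩
  change Module.finrank K (span K (dependencyVectors ℓ)) = _
  rw [span_dependencyVectors hℓμ hμ, finrank_span_eq_card (linearIndependent_depVec hμ),
    card_subtype_zero_lt_lt]

/-- For `ℓ₁ = x₁`, `ℓᵢ = x₁ + λᵢ x₂` (`λᵢ` nonzero, pairwise distinct, `s ≥ 3`), the vectors
`c_{1,u,v}` for `2 ≤ u < v ≤ s` are linearly independent, and the span of all coefficient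
vectors of 3-dependencies among `ℓ₁,...,ℓ_s` has dimension `C(s-1,2)`. -/
theorem stmt3 {K : Type*} [Field K] [CharZero K] {s : ℕ} [NeZero s] (hs : 3 ≤ s)
    (lam : Fin s → K) (hlam : ∀ i : Fin s, i ≠ 0 → lam i ≠ 0)
    (hdist : ∀ i j : Fin s, i ≠ 0 → j ≠ 0 → i ≠ j → lam i ≠ lam j)
    (ℓ : Fin s → MvPolynomial (Fin 2) K)
    (hℓ0 : ℓ 0 = X 0)
    (hℓ : ∀ i : Fin s, i ≠ 0 → ℓ i = X 0 + lam i • X 1) :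
    LinearIndependent K
      (fun p : {p : Fin s × Fin s // 0 < p.1 ∧ p.1 < p.2} =>
        cvec 0 p.val.1 p.val.2 (lam p.val.1 - lam p.val.2) (lam p.val.2) (-(lam p.val.1)))
    ∧ Module.finrank K (Submodule.span K
        {x : Fin s × Fin s → K | ∃ a b c : Fin s, a < b ∧ b < c ∧
          ∃ ca cb cc : K, ca ≠ 0 ∧ cb ≠ 0 ∧ cc ≠ 0 ∧
            ca • ℓ a + cb • ℓ b + cc • ℓ c = 0 ∧ x = cvec a b c ca cb cc})
      = (s - 1).choose 2 :=
  stmt3_general lam hlam hdist ℓ hℓ0 hℓ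
end

section
/- Let ℓ₁,...,ℓₙ ∈ K[x₁,x₂] be pairwise non-proportional linear forms spanning all linear forms (n ≥ 2). Then for every 1 ≤ b ≤ n−1, the ideal generated by all b-fold products ℓ_{i₁}⋯ℓ_{i_b} (i₁ < ⋯ < i_b) equals ⟨x₁,x₂⟩^b. -/
/-!
A product of `b` linear forms lies in `⟨x₁, x₂⟩ ^ b`. Conversely, `⟨x₁, x₂⟩ ^ b` is generated by
the forms of degree `b`, a space of dimension `b + 1`. Pick `b + 1` of the `ℓᵢ`; the `b + 1`
products omitting one of them are linearly independent, since at the zero of `ℓₖ` only the product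
omitting `ℓₖ` survives, the forms being pairwise non-proportional. Hence these products span all
forms of degree `b`.
-/

open MvPolynomial Finset
open scoped Pointwise

section LinearIndependence

variable {K M ι : Type*} [Field K] [AddCommGroup M] [Module K M]

theorem linearIndependent_of_apply_eq_zero_iff_ne {p : ι → M} (φ : ι → Module.Dual K M)
    (h : ∀ j k, φ k (p j) = 0 ↔ j ≠ k) : LinearIndependent K p := by
  refine linearIndependent_iff'.mpr fun s g hg k hk => ?_
  have hφ : ∑ j ∈ s, g j * φ k (p j) = 0 := by simpa using congrArg (φ k) hg
  rw [Finset.sum_eq_single_of_mem k hk fun j _ hjk => by rw [(h j k).mpr hjk, mul_zero]] at hφ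
  exact (mul_eq_zero.mp hφ).resolve_right fun h' => (h k k).mp h' rfl

end LinearIndependence

namespace MvPolynomial

section Homogeneous

variable {σ R : Type*} [CommSemiring R]

theorem span_pow_le_of_homogeneousSubmodule_le {s : Set (MvPolynomial σ R)}
    (hs : ∀ x ∈ s, x.IsHomogeneous 1) {I : Ideal (MvPolynomial σ R)} {b : ℕ}
    (h : homogeneousSubmodule σ R b ≤ I.restrictScalars R) : Ideal.span s ^ b ≤ I := by
  rw [Ideal.span, Submodule.span_pow, Submodule.span_le]
  calc (s ^ b : Set (MvPolynomial σ R))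
      _ ⊆ (homogeneousSubmodule σ R 1 : Set (MvPolynomial σ R)) ^ b := Set.pow_subset_pow_left hs
      _ ⊆ (homogeneousSubmodule σ R 1 ^ b : Submodule R (MvPolynomial σ R)) :=
        Submodule.pow_subset_pow _
      _ ⊆ I := by rw [homogeneousSubmodule_one_pow]; exact h

theorem IsHomogeneous.mem_span_X_pair {f : MvPolynomial (Fin 2) R} (hf : f.IsHomogeneous 1) :
    f ∈ Submodule.span R {X 0, X 1} := by
  rw [← mem_homogeneousSubmodule, homogeneousSubmodule_one_eq_span_X] at hf
  convert hf using 2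
  ext
  simp [Fin.exists_fin_two, eq_comm]

end Homogeneous

variable {K : Type*} [Field K]

theorem finrank_homogeneousSubmodule_fin_two_le (b : ℕ) :
    Module.finrank K (homogeneousSubmodule (Fin 2) K b) ≤ b + 1 := by
  set s : Set (Fin 2 →₀ ℕ) := {d | d.degree = b}
  have hdeg (d : s) : d.1 0 + d.1 1 = b := by
    simpa only [s, Set.mem_ofPred_eq, Finsupp.degree_eq_sum, Fin.sum_univ_two] using d.2
  let f : s → Fin (b + 1) := fun d => ⟨d.1 0, by have := hdeg d; omega⟩
  have hf : Function.Injective f := fun d d' hdd' => by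
    have h0 : d.1 0 = d'.1 0 := congrArg Fin.val hdd'
    have := hdeg d; have := hdeg d'
    exact Subtype.ext (Finsupp.ext (Fin.forall_fin_two.mpr ⟨h0, by omega⟩))
  have : Fintype s := Fintype.ofInjective f hf
  rw [homogeneousSubmodule_eq_finsupp_supported,
    (AddMonoidAlgebra.supportedEquivFinsupp s).finrank_eq, Module.finrank_finsupp_self]
  simpa using Fintype.card_le_of_injective f hf

theorem IsHomogeneous.exists_eval_eq_zero_iff_exists_eq_smul {ℓ : MvPolynomial (Fin 2) K}
    (hℓ : ℓ.IsHomogeneous 1) (hℓ0 : ℓ ≠ 0) :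
    ∃ v : Fin 2 → K, ∀ g : MvPolynomial (Fin 2) K, g.IsHomogeneous 1 →
      (eval v g = 0 ↔ ∃ c : K, g = c • ℓ) := by
  obtain ⟨a, c, rfl⟩ := Submodule.mem_span_pair.mp hℓ.mem_span_X_pair
  -- `a' • X 0 + c' • X 1` vanishes at `(c, -a)` iff `a' c - c' a = 0`.
  refine ⟨![c, -a], fun g hg => ⟨fun hgv => ?_, ?_⟩⟩
  · obtain ⟨a', c', rfl⟩ := Submodule.mem_span_pair.mp hg.mem_span_X_pair
    have hdet : a' * c = c' * a := by
      simp only [map_add, smul_eval, eval_X, Matrix.cons_val_zero, Matrix.cons_val_one] at hgv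
      linear_combination hgv
    have hac : a ≠ 0 ∨ c ≠ 0 := by
      by_contra! h
      simp [h.1, h.2] at hℓ0
    rcases hac with ha | hc
    · refine ⟨a' / a, ?_⟩
      rw [smul_add, smul_smul, smul_smul, div_mul_cancel₀ _ ha]
      congr 2
      field_simp
      linear_combination -hdet
    · refine ⟨c' / c, ?_⟩
      rw [smul_add, smul_smul, smul_smul, div_mul_cancel₀ _ hc]
      congr 2
      field_simp
      linear_combination hdet
  · rintro ⟨t, rfl⟩
    simp only [smul_eval, map_add, eval_X, Matrix.cons_val_zero, Matrix.cons_val_one]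
    ring

theorem span_prod_erase_eq_homogeneousSubmodule {ι : Type*} [DecidableEq ι]
    {ℓ : ι → MvPolynomial (Fin 2) K} (hhom : ∀ i, (ℓ i).IsHomogeneous 1) (hne : ∀ i, ℓ i ≠ 0)
    (hprop : ∀ i j, i ≠ j → ∀ c : K, ℓ i ≠ c • ℓ j) {T : Finset ι} {b : ℕ} (hT : #T = b + 1) :
    Submodule.span K (Set.range fun j : T => ∏ i ∈ T.erase j, ℓ i) =
      homogeneousSubmodule (Fin 2) K b := by
  choose v hv using fun i => (hhom i).exists_eval_eq_zero_iff_exists_eq_smul (hne i)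
  have hroot (i k : ι) : aeval (v k) (ℓ i) = 0 ↔ i = k := by
    rw [aeval_eq_eval, hv k (ℓ i) (hhom i)]
    refine ⟨fun ⟨c, hc⟩ => ?_, fun hik => ⟨1, by rw [hik, one_smul]⟩⟩
    by_contra hik
    exact hprop i k hik c hc
  have hindep : LinearIndependent K fun j : T => ∏ i ∈ T.erase j, ℓ i := by
    refine linearIndependent_of_apply_eq_zero_iff_ne (fun k => (aeval (v k)).toLinearMap)
      fun j k => ?_
    rw [AlgHom.toLinearMap_apply, map_prod, Finset.prod_eq_zero_iff]
    simp only [hroot, exists_eq_right, Finset.mem_erase, k.2, and_true, ne_comm (a := j),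
      Subtype.val_injective.ne_iff]
  have hle : Submodule.span K (Set.range fun j : T => ∏ i ∈ T.erase j, ℓ i) ≤
      homogeneousSubmodule (Fin 2) K b := by
    rw [Submodule.span_le]
    rintro _ ⟨j, rfl⟩
    simpa [Finset.card_erase_of_mem j.2, hT] using
      IsHomogeneous.prod (T.erase j) ℓ (fun _ => 1) fun i _ => hhom i
  have : FiniteDimensional K (homogeneousSubmodule (Fin 2) K b) :=
    (Submodule.fg_iff_finiteDimensional _).mp (homogeneousSubmodule_fg _ _ b)
  refine Submodule.eq_of_le_of_finrank_le hle ?_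
  rw [finrank_span_eq_card hindep, Fintype.card_coe, hT]
  exact finrank_homogeneousSubmodule_fin_two_le b

end MvPolynomial

theorem stmt4_general {K : Type*} [Field K] {n : ℕ} (hn : 2 ≤ n)
    (ℓ : Fin n → MvPolynomial (Fin 2) K)
    (hhom : ∀ i, (ℓ i).IsHomogeneous 1)
    (hne : ∀ i, ℓ i ≠ 0)
    (hprop : ∀ i j : Fin n, i ≠ j → ∀ c : K, ℓ i ≠ c • ℓ j)
    (b : ℕ) (hbn : b ≤ n - 1) :
    Ideal.span {p : MvPolynomial (Fin 2) K |
        ∃ S : Finset (Fin n), S.card = b ∧ p = ∏ i ∈ S, ℓ i}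
      = (Ideal.span {X 0, X 1} : Ideal (MvPolynomial (Fin 2) K)) ^ b := by
  apply le_antisymm
  · rw [Ideal.span_le]
    rintro _ ⟨S, rfl, rfl⟩
    rw [← Finset.prod_const]
    exact Ideal.prod_mem_prod fun i _ =>
      Submodule.span_le_restrictScalars K _ _ (hhom i).mem_span_X_pair
  · refine span_pow_le_of_homogeneousSubmodule_le (by simp [isHomogeneous_X]) ?_
    obtain ⟨T, -, hT⟩ := Finset.exists_subset_card_eq (s := (univ : Finset (Fin n))) (n := b + 1)
      (by simpa using Nat.add_le_of_le_sub (one_le_two.trans hn) hbn)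
    rw [← span_prod_erase_eq_homogeneousSubmodule hhom hne hprop hT, Submodule.span_le]
    rintro _ ⟨j, rfl⟩
    exact Ideal.subset_span ⟨T.erase j, by simp [Finset.card_erase_of_mem j.2, hT], rfl⟩

/-- For pairwise non-proportional linear forms `ℓ₁,...,ℓₙ` in `K[x₁,x₂]` spanning all linear
forms (`n ≥ 2`), for every `1 ≤ b ≤ n-1` the ideal of `b`-fold products equals `⟨x₁,x₂⟩^b`. -/
theorem stmt4 {K : Type*} [Field K] [CharZero K] {n : ℕ} (hn : 2 ≤ n)
    (ℓ : Fin n → MvPolynomial (Fin 2) K)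
    (hhom : ∀ i, (ℓ i).IsHomogeneous 1)
    (hne : ∀ i, ℓ i ≠ 0)
    (hprop : ∀ i j : Fin n, i ≠ j → ∀ c : K, ℓ i ≠ c • ℓ j)
    (hspan : ∀ g : MvPolynomial (Fin 2) K, g.IsHomogeneous 1 →
      g ∈ Submodule.span K (Set.range ℓ))
    (b : ℕ) (hb1 : 1 ≤ b) (hbn : b ≤ n - 1) :
    Ideal.span {p : MvPolynomial (Fin 2) K |
        ∃ S : Finset (Fin n), S.card = b ∧ p = ∏ i ∈ S, ℓ i}
      = (Ideal.span {X 0, X 1} : Ideal (MvPolynomial (Fin 2) K)) ^ b :=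
  stmt4_general hn ℓ hhom hne hprop b hbn
end

section
/- Let Σ be a collection of n linear forms in R = K[x₁,...,x_k], and suppose the linear form ℓ occurs at least twice in Σ. Let Σ' := Σ \ {ℓ} (one copy removed) and Σ'' := Σ' \ {ℓ}. If I_a(Σ') : ℓ = I_{a−1}(Σ''), then I_a(Σ) : ℓ = I_{a−1}(Σ'). -/
open MvPolynomial

/-- The ideal generated by all `a`-fold products of members of a multiset `Σ` of
polynomials. -/
noncomputable def foldProducts {K : Type*} [Field K] {k : ℕ}
    (Sig : Multiset (MvPolynomial (Fin k) K)) (a : ℕ) : Ideal (MvPolynomial (Fin k) K) :=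
  Ideal.span {p | ∃ T : Multiset (MvPolynomial (Fin k) K), T ≤ Sig ∧ Multiset.card T = a ∧
    p = T.prod}

/-! Splitting the `a`-fold products according to whether they use a copy of `ℓ` gives
`I_a(Σ) = ℓ I_{a-1}(Σ') + I_a(Σ')`. If `fℓ = ℓg + z` with `g ∈ I_{a-1}(Σ')` and `z ∈ I_a(Σ')`,
then `(f - g)ℓ ∈ I_a(Σ')`, so `f - g ∈ I_{a-1}(Σ'') ⊆ I_{a-1}(Σ')`, hence `f ∈ I_{a-1}(Σ')`. -/

theorem Ideal.colon_span_singleton_eq_of_eq_mul_sup {R : Type*} [CommRing R]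
    {I J L : Ideal R} {x : R} (hI : I = Ideal.span {x} * J ⊔ L)
    (hL : L.colon (Ideal.span {x}) ≤ J) :
    I.colon (Ideal.span {x}) = J := by
  apply le_antisymm
  · intro f hf
    rw [Ideal.mem_colon_span_singleton, hI, Submodule.mem_sup] at hf
    obtain ⟨_, hy, z, hz, hsum⟩ := hf
    obtain ⟨g, hg, rfl⟩ := Ideal.mem_span_singleton_mul.mp hy
    have hfg : f - g ∈ L.colon (Ideal.span {x}) := by
      rw [Ideal.mem_colon_span_singleton]
      convert hz using 1
      linear_combination -hsum
    simpa using J.add_mem (hL hfg) hg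
  · intro f hf
    rw [Ideal.mem_colon_span_singleton, hI]
    exact Submodule.mem_sup_left (Ideal.mem_span_singleton_mul.mpr ⟨f, hf, mul_comm x f⟩)

section foldProducts

variable {K : Type*} [Field K] {k : ℕ}

theorem foldProducts_mono {S S' : Multiset (MvPolynomial (Fin k) K)} (h : S ≤ S') (a : ℕ) :
    foldProducts S a ≤ foldProducts S' a := by
  apply Ideal.span_mono
  rintro p ⟨T, hT, hc, rfl⟩
  exact ⟨T, hT.trans h, hc, rfl⟩

theorem foldProducts_cons [DecidableEq (MvPolynomial (Fin k) K)]
    (x : MvPolynomial (Fin k) K) (S : Multiset (MvPolynomial (Fin k) K)) (a : ℕ) :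
    foldProducts (x ::ₘ S) (a + 1) =
      Ideal.span {x} * foldProducts S a ⊔ foldProducts S (a + 1) := by
  apply le_antisymm
  · rw [foldProducts, Ideal.span_le]
    rintro _ ⟨T, hT, hc, rfl⟩
    by_cases hxT : x ∈ T
    · refine Submodule.mem_sup_left (Ideal.mem_span_singleton_mul.mpr
        ⟨(T.erase x).prod, Ideal.subset_span ⟨T.erase x, ?_, ?_, rfl⟩, ?_⟩)
      · simpa using Multiset.erase_le_erase x hT
      · simp [Multiset.card_erase_of_mem hxT, hc]
      · rw [← Multiset.prod_cons, Multiset.cons_erase hxT]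
    · exact Submodule.mem_sup_right
        (Ideal.subset_span ⟨T, (Multiset.le_cons_of_notMem hxT).mp hT, hc, rfl⟩)
  · refine sup_le ?_ (foldProducts_mono (Multiset.le_cons_self S x) _)
    rw [foldProducts, foldProducts, Ideal.span_mul_span', Ideal.span_le]
    rintro _ ⟨y, hy, _, ⟨T, hT, hc, rfl⟩, rfl⟩
    obtain rfl : x = y := hy.symm
    exact Ideal.subset_span ⟨x ::ₘ T, Multiset.cons_le_cons x hT, by simp [hc],
      (Multiset.prod_cons x T).symm⟩

end foldProducts

theorem stmt5_general {K : Type*} [Field K] {k : ℕ} [DecidableEq (MvPolynomial (Fin k) K)]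
    (S : Multiset (MvPolynomial (Fin k) K))
    (ℓ : MvPolynomial (Fin k) K) (hl : 2 ≤ S.count ℓ)
    (a : ℕ) (ha1 : 1 ≤ a)
    (hcolon : (foldProducts (S.erase ℓ) a).colon (Ideal.span {ℓ})
      = foldProducts ((S.erase ℓ).erase ℓ) (a - 1)) :
    (foldProducts S a).colon (Ideal.span {ℓ}) = foldProducts (S.erase ℓ) (a - 1) := by
  obtain ⟨b, rfl⟩ := Nat.exists_eq_add_of_le' ha1
  have hS : ℓ ::ₘ S.erase ℓ = S := Multiset.cons_erase (Multiset.count_pos.mp (by omega))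
  rw [Nat.add_sub_cancel] at hcolon ⊢
  apply Ideal.colon_span_singleton_eq_of_eq_mul_sup (L := foldProducts (S.erase ℓ) (b + 1))
  · rw [← foldProducts_cons, hS]
  · exact hcolon.le.trans (foldProducts_mono (Multiset.erase_le ℓ _) _)

/-- If `ℓ` occurs at least twice in `Σ`, `Sig = Σ \ {ℓ}`, `Sig' = Sig \ {ℓ}`, and
`I_a(Sig) : ℓ = I_{a-1}(Sig')`, then `I_a(Σ) : ℓ = I_{a-1}(Sig)`. -/
theorem stmt5 {K : Type*} [Field K] {k n : ℕ} [DecidableEq (MvPolynomial (Fin k) K)]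
    (S : Multiset (MvPolynomial (Fin k) K)) (hcard : Multiset.card S = n)
    (hlin : ∀ p ∈ S, MvPolynomial.IsHomogeneous p 1)
    (ℓ : MvPolynomial (Fin k) K) (hl : 2 ≤ S.count ℓ)
    (a : ℕ) (ha1 : 1 ≤ a) (han : a ≤ n)
    (hcolon : (foldProducts (S.erase ℓ) a).colon (Ideal.span {ℓ})
      = foldProducts ((S.erase ℓ).erase ℓ) (a - 1)) :
    (foldProducts S a).colon (Ideal.span {ℓ}) = foldProducts (S.erase ℓ) (a - 1) :=
  stmt5_general S ℓ hl a ha1 hcolon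
end

section
/- Let Σ consist of the linear forms ℓ₁,...,ℓ_s with multiplicities n₁,...,n_s ≥ 1 respectively, where gcd(ℓᵢ,ℓⱼ) = 1 for i ≠ j, and let n = n₁+⋯+n_s. Then I_{n−1}(Σ) = (ℓ₁^{n₁−1}⋯ℓ_s^{n_s−1}) · I_{s−1}(Σ₀), where Σ₀ = {ℓ₁,...,ℓ_s}. -/
open MvPolynomial Finset

lemma not_unit_of_hom1 {K : Type*} [Field K] {k : ℕ}
    {p : MvPolynomial (Fin k) K} (hp : p.IsHomogeneous 1) : ¬ IsUnit p := by
  intro hu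
  have h0 : constantCoeff p = 0 := by
    have := hp.coeff_eq_zero (d := 0) (by simp)
    simpa [MvPolynomial.constantCoeff_eq] using this
  have := hu.map (constantCoeff (σ := Fin k) (R := K))
  rw [h0] at this
  exact not_isUnit_zero this

lemma mcard_sum {α β : Type*} (s : Finset α) (f : α → Multiset β) :
    Multiset.card (∑ i ∈ s, f i) = ∑ i ∈ s, Multiset.card (f i) := by
  induction s using Finset.cons_induction with
  | empty => simp
  | cons a s h ih => simp [Finset.sum_cons, ih]

lemma map_eq_sum_replicate {α β : Type*} (t : Finset α) (f : α → β) :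
    Multiset.map f t.val = ∑ i ∈ t, Multiset.replicate 1 (f i) := by
  induction t using Finset.cons_induction with
  | empty => simp
  | cons a s h ih => simp [Finset.sum_cons, ih]

lemma key_lemma {K : Type*} [Field K] {k s : ℕ}
    (ℓ : Fin s → MvPolynomial (Fin k) K)
    (hlin : ∀ i, (ℓ i).IsHomogeneous 1)
    (hcop : ∀ i j : Fin s, i ≠ j → IsRelPrime (ℓ i) (ℓ j))
    (m : Fin s → ℕ) (hm : ∀ i, 1 ≤ m i)
    (n : ℕ) (hn : n = ∑ i, m i) (hs : 0 < s) :
    foldProducts (∑ i : Fin s, Multiset.replicate (m i) (ℓ i)) (n - 1)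
      = Ideal.span (Set.range fun j : Fin s =>
          ∏ i, ℓ i ^ (m i - if i = j then 1 else 0)) := by
  set Sg := ∑ i : Fin s, Multiset.replicate (m i) (ℓ i) with hSg
  have hcardSg : Multiset.card Sg = n := by
    rw [hSg, mcard_sum, hn]; simp
  have hn1 : 1 ≤ n := by
    rw [hn]
    calc 1 ≤ s := hs
    _ = ∑ _i : Fin s, 1 := by simp
    _ ≤ ∑ i, m i := Finset.sum_le_sum fun i _ => hm i
  have hSgprod : Sg.prod = ∏ i, ℓ i ^ m i := by
    rw [hSg, Multiset.prod_sum]; simp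
  have hgen : ∀ j, ℓ j * (∏ i, ℓ i ^ (m i - if i = j then 1 else 0)) = ∏ i, ℓ i ^ m i := by
    intro j
    have h1 : ℓ j = ∏ i, ℓ i ^ (if i = j then 1 else 0) := by
      rw [show (fun i => ℓ i ^ (if i = j then 1 else 0)) = fun i =>
          (if i = j then ℓ i else 1) from funext fun i => by split <;> simp]
      simp
    rw [h1, ← Finset.prod_mul_distrib]
    refine Finset.prod_congr rfl fun i _ => ?_
    rw [← pow_add]
    congr 1
    have := hm i
    split <;> omega
  unfold foldProducts
  congr 1
  ext p
  constructor
  · rintro ⟨T, hT, hcard, rfl⟩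
    have hlt : T < Sg := lt_of_le_of_ne hT (by
      intro h; rw [h, hcardSg] at hcard; omega)
    obtain ⟨x, hx⟩ := Multiset.lt_iff_cons_le.1 hlt
    have hxT : x ::ₘ T = Sg := Multiset.eq_of_le_of_card_le hx (by
      rw [Multiset.card_cons, hcard, hcardSg]; omega)
    have hxmem : x ∈ Sg := by rw [← hxT]; exact Multiset.mem_cons_self _ _
    obtain ⟨j, -, hj⟩ := Multiset.mem_sum.1 hxmem
    have hxj : x = ℓ j := Multiset.eq_of_mem_replicate hj
    by_cases hz : ℓ j = 0
    · have hall : ∀ i, i = j := by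
        intro i
        by_contra hne
        exact not_unit_of_hom1 (hlin i)
          (isRelPrime_zero_right.mp (hz ▸ hcop i j hne))
      have huniv : (univ : Finset (Fin s)) = {j} := by
        ext i; simp [hall i]
      have hnm : n = m j := by rw [hn, huniv, Finset.sum_singleton]
      have hT0 : ∀ b ∈ T, b = (0 : MvPolynomial (Fin k) K) := by
        intro b hb
        have hbSg : b ∈ Sg := Multiset.mem_of_le hT hb
        obtain ⟨i, -, hi⟩ := Multiset.mem_sum.1 hbSg
        rw [Multiset.eq_of_mem_replicate hi, hall i, hz]
      have hTrep : T = Multiset.replicate (n - 1) 0 := by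
        rw [← hcard]
        exact Multiset.eq_replicate_card.2 hT0
      refine ⟨j, ?_⟩
      rw [hTrep, Multiset.prod_replicate, huniv]
      dsimp only
      rw [Finset.prod_singleton, if_pos rfl, hz]
      congr 1
      omega
    · refine ⟨j, ?_⟩
      apply mul_left_cancel₀ hz
      rw [hgen j, ← hSgprod, ← hxT, hxj, Multiset.prod_cons]
  · rintro ⟨j, rfl⟩
    refine ⟨∑ i, Multiset.replicate (m i - if i = j then 1 else 0) (ℓ i), ?_, ?_, ?_⟩
    · exact Finset.sum_le_sum fun i _ =>
        (Multiset.replicate_le_replicate _).2 (Nat.sub_le _ _)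
    · rw [mcard_sum]
      simp only [Multiset.card_replicate]
      have hsplit : ∀ (f : Fin s → ℕ), ∑ i, f i = f j + ∑ i ∈ univ.erase j, f i :=
        fun f => (Finset.add_sum_erase univ f (mem_univ j)).symm
      rw [hn, hsplit m, hsplit (fun i => m i - if i = j then 1 else 0)]
      have h2 : ∑ i ∈ univ.erase j, (m i - if i = j then 1 else 0)
          = ∑ i ∈ univ.erase j, m i :=
        Finset.sum_congr rfl fun i hi => by simp [Finset.ne_of_mem_erase hi]
      rw [h2, if_pos rfl]
      have := hm j
      omega
    · rw [Multiset.prod_sum]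
      simp

/-- If `Σ` consists of pairwise coprime linear forms `ℓ₁,...,ℓ_s` with multiplicities
`n₁,...,n_s ≥ 1` and `n = n₁+⋯+n_s`, then
`I_{n-1}(Σ) = (ℓ₁^{n₁-1}⋯ℓ_s^{n_s-1}) · I_{s-1}(Σ₀)` where `Σ₀ = {ℓ₁,...,ℓ_s}`. -/
theorem stmt7 {K : Type*} [Field K] {k s : ℕ}
    (ℓ : Fin s → MvPolynomial (Fin k) K)
    (hlin : ∀ i, (ℓ i).IsHomogeneous 1)
    (hcop : ∀ i j : Fin s, i ≠ j → IsRelPrime (ℓ i) (ℓ j))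
    (m : Fin s → ℕ) (hm : ∀ i, 1 ≤ m i)
    (n : ℕ) (hn : n = ∑ i, m i) :
    foldProducts (∑ i : Fin s, Multiset.replicate (m i) (ℓ i)) (n - 1)
      = Ideal.span {∏ i : Fin s, ℓ i ^ (m i - 1)} *
          foldProducts (Multiset.map ℓ (Finset.univ.val : Multiset (Fin s))) (s - 1) := by
  rcases Nat.eq_zero_or_pos s with hs | hs
  · subst hs
    have hn0 : n = 0 := by simpa using hn
    subst hn0
    simp only [Finset.univ_eq_empty, Finset.sum_empty, Finset.prod_empty,
      Finset.empty_val, Multiset.map_zero]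
    have htop : foldProducts (0 : Multiset (MvPolynomial (Fin k) K)) 0 = ⊤ := by
      rw [Ideal.eq_top_iff_one]
      exact Ideal.subset_span ⟨0, le_rfl, rfl, Multiset.prod_zero.symm⟩
    rw [htop, Ideal.span_singleton_one, Ideal.top_mul]
  · rw [key_lemma ℓ hlin hcop m hm n hn hs,
      map_eq_sum_replicate univ ℓ,
      key_lemma ℓ hlin hcop (fun _ => 1) (fun _ => le_rfl) s (by simp) hs,
      Ideal.span_mul_span']
    congr 1
    ext p
    constructor
    · rintro ⟨j, rfl⟩
      refine ⟨∏ i, ℓ i ^ (m i - 1), rfl, ∏ i, ℓ i ^ (1 - if i = j then 1 else 0),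
        ⟨j, rfl⟩, ?_⟩
      dsimp only
      rw [← Finset.prod_mul_distrib]
      refine Finset.prod_congr rfl fun i _ => ?_
      rw [← pow_add]
      congr 1
      have := hm i
      split <;> omega
    · rintro ⟨a, ha, b, ⟨j, rfl⟩, rfl⟩
      rw [Set.mem_singleton_iff.mp ha]
      refine ⟨j, ?_⟩
      dsimp only
      rw [← Finset.prod_mul_distrib]
      refine Finset.prod_congr rfl fun i _ => ?_
      rw [← pow_add]
      congr 1
      have := hm i
      split <;> omega
end

section
/- Let 𝒜 be an arrangement of n ≥ 3 pairwise non-proportional linear forms in K[x₁,...,x_k] with rank(𝒜) ≥ 3. Let X₁,...,X_r be the distinct rank-2 flats of 𝒜 and n_u := |𝒜_{X_u}| the number of hyperplanes containing X_u. Then n₁ + ⋯ + n_r − r ≥ n. -/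
/-!
Every flat contains at least two of the forms, and since the rank is at least 3 every form `ℓᵢ`
lies in at least two flats: pick `ℓⱼ ∉ span ℓᵢ` and then `ℓₘ ∉ span(ℓᵢ, ℓⱼ)`; the flats through
`(i, j)` and `(i, m)` differ because only the second contains `m`. Double counting the incidences
therefore gives `∑ n_u ≥ 2r` and `∑ n_u ≥ 2n`, whose average is the claim.
-/

open MvPolynomial Finset Classical

noncomputable section

/-- The rank-2 flats of the arrangement defined by `ℓ`, encoded by the sets
`𝒜_X = {u | ℓ_u ∈ span(ℓᵢ, ℓⱼ)}` for pairs `i ≠ j`. -/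
noncomputable def rank2Flats {K : Type*} [Field K] {k n : ℕ}
    (ℓ : Fin n → MvPolynomial (Fin k) K) : Finset (Finset (Fin n)) :=
  Finset.image
    (fun p : Fin n × Fin n =>
      Finset.univ.filter (fun u => ℓ u ∈ Submodule.span K {ℓ p.1, ℓ p.2}))
    (Finset.univ.filter (fun p : Fin n × Fin n => p.1 ≠ p.2))

theorem exists_notMem_span_of_card_lt_finrank {ι K V : Type*} [DivisionRing K] [AddCommGroup V]
    [Module K V] (v : ι → V) (s : Finset V)
    (h : s.card < Module.finrank K (Submodule.span K (Set.range v))) :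
    ∃ i, v i ∉ Submodule.span K (s : Set V) := by
  by_contra! hs
  have hle : Submodule.span K (Set.range v) ≤ Submodule.span K (s : Set V) :=
    Submodule.span_le.mpr (Set.range_subset_iff.mpr hs)
  have := (Submodule.finrank_mono hle).trans (finrank_span_finset_le_card s)
  omega

section rank2Flats

variable {K : Type*} [Field K] {k n : ℕ} (ℓ : Fin n → MvPolynomial (Fin k) K)

def flatThrough (i j : Fin n) : Finset (Fin n) :=
  univ.filter fun u => ℓ u ∈ Submodule.span K {ℓ i, ℓ j}

theorem mem_rank2Flats {S : Finset (Fin n)} :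
    S ∈ rank2Flats ℓ ↔ ∃ i j, i ≠ j ∧ flatThrough ℓ i j = S := by
  simp [rank2Flats, flatThrough]

theorem left_mem_flatThrough (i j : Fin n) : i ∈ flatThrough ℓ i j := by
  simpa [flatThrough] using Submodule.subset_span (by simp)

theorem right_mem_flatThrough (i j : Fin n) : j ∈ flatThrough ℓ i j := by
  simpa [flatThrough] using Submodule.subset_span (by simp)

theorem two_le_card_of_mem_rank2Flats {S : Finset (Fin n)} (hS : S ∈ rank2Flats ℓ) :
    2 ≤ S.card := by
  obtain ⟨i, j, hij, rfl⟩ := (mem_rank2Flats ℓ).mp hS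
  exact one_lt_card.mpr ⟨i, left_mem_flatThrough ℓ i j, j, right_mem_flatThrough ℓ i j, hij⟩

theorem two_le_card_rank2Flats_filter_mem
    (hrank : 3 ≤ Module.finrank K (Submodule.span K (Set.range ℓ))) (i : Fin n) :
    2 ≤ ((rank2Flats ℓ).filter (i ∈ ·)).card := by
  obtain ⟨j, hj⟩ := exists_notMem_span_of_card_lt_finrank (K := K) ℓ {ℓ i}
    (by rw [card_singleton]; omega)
  obtain ⟨m, hm⟩ := exists_notMem_span_of_card_lt_finrank (K := K) ℓ {ℓ i, ℓ j}
    ((card_insert_le _ _).trans_lt (by rw [card_singleton]; omega))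
  simp only [coe_insert, coe_singleton] at hj hm
  have hji : j ≠ i := by rintro rfl; exact hj (Submodule.mem_span_singleton_self _)
  have hmi : m ≠ i := by rintro rfl; exact hm (Submodule.subset_span (by simp))
  have hm_notMem : m ∉ flatThrough ℓ i j := by simpa [flatThrough] using hm
  refine one_lt_card.mpr ⟨flatThrough ℓ i j, ?_, flatThrough ℓ i m, ?_, ?_⟩
  · exact mem_filter.mpr ⟨(mem_rank2Flats ℓ).mpr ⟨i, j, hji.symm, rfl⟩, left_mem_flatThrough ℓ i j⟩
  · exact mem_filter.mpr ⟨(mem_rank2Flats ℓ).mpr ⟨i, m, hmi.symm, rfl⟩, left_mem_flatThrough ℓ i m⟩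
  · exact fun h => hm_notMem (h ▸ right_mem_flatThrough ℓ i m)

end rank2Flats

theorem stmt9_general {K : Type*} [Field K] {k n : ℕ}
    (ℓ : Fin n → MvPolynomial (Fin k) K)
    (hrank : 3 ≤ Module.finrank K (Submodule.span K (Set.range ℓ))) :
    n + (rank2Flats ℓ).card ≤ ∑ S ∈ rank2Flats ℓ, S.card := by
  have hflats : (rank2Flats ℓ).card • 2 ≤ ∑ S ∈ rank2Flats ℓ, S.card :=
    card_nsmul_le_sum _ _ _ fun S hS => two_le_card_of_mem_rank2Flats ℓ hS
  have hforms : n * 2 ≤ ∑ S ∈ rank2Flats ℓ, S.card := by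
    simpa using le_sum_card (two_le_card_rank2Flats_filter_mem ℓ hrank)
  rw [smul_eq_mul] at hflats
  omega

/-- For an arrangement of `n ≥ 3` pairwise non-proportional linear forms of rank `≥ 3`, with
rank-2 flats `X₁,...,X_r` of sizes `n_u = |𝒜_{X_u}|`, one has `n₁+⋯+n_r − r ≥ n`. -/
theorem stmt9 {K : Type*} [Field K] [CharZero K] {k n : ℕ} (hn : 3 ≤ n)
    (ℓ : Fin n → MvPolynomial (Fin k) K)
    (hhom : ∀ i, (ℓ i).IsHomogeneous 1)
    (hne : ∀ i, ℓ i ≠ 0)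
    (hprop : ∀ i j : Fin n, i ≠ j → ∀ c : K, ℓ i ≠ c • ℓ j)
    (hrank : 3 ≤ Module.finrank K (Submodule.span K (Set.range ℓ))) :
    n + (rank2Flats ℓ).card ≤ ∑ S ∈ rank2Flats ℓ, S.card :=
  stmt9_general ℓ hrank

end
end

section
/- Suppose for each 1 ≤ i < j ≤ n we have scalars α_{i,j}, β_{i,j} ∈ K such that Σ_{1≤i<j≤n}(α_{i,j}ℓᵢ + β_{i,j}ℓⱼ)f_{i,j} = 0, where ℓ₁,...,ℓₙ are pairwise coprime linear forms and f_{i,j} = ∏_{u∉{i,j}}ℓ_u. Then setting fᵢ := ∏_{u≠i}ℓ_u, one has Σ_{i=1}^n (Σ_{u<i} α_{u,i} + Σ_{v>i} β_{i,v}) fᵢ = 0, and moreover each coefficient Σ_{u<i} α_{u,i} + Σ_{v>i} β_{i,v} equals 0. -/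
/-!
Since `ℓᵢ f_{i,j} = f_j` for `i ≠ j`, the syzygy collapses to the scalar syzygy `Σᵢ cᵢ fᵢ = 0`.
A nonzero linear form is prime in the factorial ring `K[x₁,…,x_k]`, and `ℓᵢ` divides no `ℓ_u`
with `u ≠ i` (a quotient would have degree zero), so `ℓᵢ` divides every `f_j` with `j ≠ i` but
not `fᵢ`; hence `cᵢ = 0`.
-/

open MvPolynomial Finset

namespace MvPolynomial

variable {σ R : Type*} [CommRing R] [IsDomain R]

theorem exists_eq_smul_of_dvd_of_totalDegree_le {p q : MvPolynomial σ R} (hpq : p ∣ q)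
    (hq : q ≠ 0) (hdeg : q.totalDegree ≤ p.totalDegree) : ∃ c : R, q = c • p := by
  obtain ⟨r, rfl⟩ := hpq
  rw [totalDegree_mul_of_isDomain (left_ne_zero_of_mul hq) (right_ne_zero_of_mul hq)] at hdeg
  obtain ⟨c, rfl⟩ : ∃ c, r = C c := ⟨_, totalDegree_eq_zero_iff_eq_C.1 (by omega)⟩
  exact ⟨c, by rw [smul_eq_C_mul, mul_comm]⟩

variable {K : Type*} [Field K]

theorem IsHomogeneous.irreducible_of_one {p : MvPolynomial σ K} (hp : p.IsHomogeneous 1)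
    (hp0 : p ≠ 0) : Irreducible p := by
  refine irreducible_of_totalDegree_eq_one (hp.totalDegree hp0) fun x hx => ?_
  obtain ⟨d, hd⟩ := ne_zero_iff.1 hp0
  exact (ne_zero_of_dvd_ne_zero hd (hx d)).isUnit

end MvPolynomial

theorem linearIndependent_prod_erase {ι K R : Type*} [Fintype ι] [DecidableEq ι] [Field K]
    [CommRing R] [Algebra K R] {ℓ : ι → R} (hprime : ∀ i, Prime (ℓ i))
    (hdvd : Pairwise fun i j => ¬ ℓ i ∣ ℓ j) :
    LinearIndependent K fun i => ∏ u ∈ univ.erase i, ℓ u := by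
  rw [Fintype.linearIndependent_iff]
  intro c hc i
  by_contra hci
  have hrest : ℓ i ∣ ∑ j ∈ univ.erase i, c j • ∏ u ∈ univ.erase j, ℓ u :=
    dvd_sum fun j hj => by
      rw [Algebra.smul_def]
      exact Dvd.dvd.mul_left (dvd_prod_of_mem _ (mem_erase.2 ⟨(ne_of_mem_erase hj).symm,
        mem_univ i⟩)) _
  have hi : ℓ i ∣ c i • ∏ u ∈ univ.erase i, ℓ u := by
    rw [← dvd_add_left hrest,
      add_sum_erase univ (fun j => c j • ∏ u ∈ univ.erase j, ℓ u) (mem_univ i), hc]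
    exact dvd_zero _
  rw [Algebra.smul_def, ((isUnit_iff_ne_zero.2 hci).map (algebraMap K R)).dvd_mul_left,
    (hprime i).dvd_finsetProd_iff] at hi
  obtain ⟨u, hu, hiu⟩ := hi
  exact hdvd (ne_of_mem_erase hu).symm hiu

theorem sum_filter_lt_smul_mul_eq_sum_smul {ι S R : Type*} [Fintype ι] [LinearOrder ι]
    [CommSemiring S] [CommSemiring R] [Algebra S R] {ℓ g : ι → R} {f : ι → ι → R}
    (hℓf : ∀ i j, i ≠ j → ℓ i * f i j = g j) (hf : ∀ i j, f i j = f j i) (α β : ι → ι → S) :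
    ∑ p ∈ univ.filter (fun p : ι × ι => p.1 < p.2),
        (α p.1 p.2 • ℓ p.1 + β p.1 p.2 • ℓ p.2) * f p.1 p.2 =
      ∑ i, ((∑ u ∈ univ.filter (· < i), α u i) + ∑ v ∈ univ.filter (i < ·), β i v) • g i := by
  have hterm : ∀ p ∈ univ.filter (fun p : ι × ι => p.1 < p.2),
      (α p.1 p.2 • ℓ p.1 + β p.1 p.2 • ℓ p.2) * f p.1 p.2 =
        α p.1 p.2 • g p.2 + β p.1 p.2 • g p.1 := fun p hp => by
    have hlt : p.1 < p.2 := (mem_filter.1 hp).2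
    rw [add_mul, smul_mul_assoc, smul_mul_assoc, hℓf _ _ hlt.ne, hf, hℓf _ _ hlt.ne']
  rw [sum_congr rfl hterm, sum_add_distrib,
    sum_finset_product_right _ univ (fun j => univ.filter (· < j)) (by simp),
    sum_finset_product _ univ (fun i => univ.filter (i < ·)) (by simp), ← sum_add_distrib]
  simp only [add_smul, sum_smul]

theorem stmt12_general {K : Type*} [Field K] {k n : ℕ}
    (ℓ : Fin n → MvPolynomial (Fin k) K)
    (hhom : ∀ i, (ℓ i).IsHomogeneous 1)
    (hne : ∀ i, ℓ i ≠ 0)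
    (hprop : ∀ i j : Fin n, i ≠ j → ∀ c : K, ℓ i ≠ c • ℓ j)
    (f : Fin n → Fin n → MvPolynomial (Fin k) K)
    (hf : ∀ i j, f i j = ∏ u ∈ (Finset.univ \ {i, j}), ℓ u)
    (g : Fin n → MvPolynomial (Fin k) K)
    (hg : ∀ i, g i = ∏ u ∈ (Finset.univ \ {i}), ℓ u)
    (α β : Fin n → Fin n → K)
    (hsyz : ∑ p ∈ Finset.univ.filter (fun p : Fin n × Fin n => p.1 < p.2),
      (α p.1 p.2 • ℓ p.1 + β p.1 p.2 • ℓ p.2) * f p.1 p.2 = 0) :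
    (∑ i : Fin n,
        ((∑ u ∈ Finset.univ.filter (· < i), α u i)
          + ∑ v ∈ Finset.univ.filter (i < ·), β i v) • g i = 0)
    ∧ ∀ i : Fin n,
        (∑ u ∈ Finset.univ.filter (· < i), α u i)
          + ∑ v ∈ Finset.univ.filter (i < ·), β i v = 0 := by
  have hg_erase : g = fun i => ∏ u ∈ univ.erase i, ℓ u :=
    funext fun i => by rw [hg, sdiff_singleton_eq_erase]
  have hℓf : ∀ i j, i ≠ j → ℓ i * f i j = g j := fun i j hij => by
    rw [hf, hg_erase, sdiff_insert, sdiff_singleton_eq_erase,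
      mul_prod_erase _ _ (mem_erase.2 ⟨hij, mem_univ i⟩)]
  have hsum := (sum_filter_lt_smul_mul_eq_sum_smul hℓf
    (fun i j => by rw [hf, hf, pair_comm]) α β).symm.trans hsyz
  have hdvd : Pairwise fun i j => ¬ ℓ i ∣ ℓ j := fun i j hij hij_dvd => by
    obtain ⟨c, hc⟩ := exists_eq_smul_of_dvd_of_totalDegree_le hij_dvd (hne j)
      (by rw [(hhom j).totalDegree (hne j), (hhom i).totalDegree (hne i)])
    exact hprop j i hij.symm c hc
  have hli : LinearIndependent K g := hg_erase ▸
    linearIndependent_prod_erase (fun i => ((hhom i).irreducible_of_one (hne i)).prime) hdvd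
  exact ⟨hsum, Fintype.linearIndependent_iff.1 hli _ hsum⟩

/-- If `Σ_{i<j} (α_{i,j} ℓᵢ + β_{i,j} ℓⱼ) f_{i,j} = 0` with scalar coefficients, then the
induced scalar syzygy `Σᵢ (Σ_{u<i} α_{u,i} + Σ_{v>i} β_{i,v}) fᵢ = 0` on the generators
`fᵢ = ∏_{u≠i} ℓ_u` of `I_{n-1}` holds, and each of its coefficients vanishes. -/
theorem stmt12 {K : Type*} [Field K] [CharZero K] {k n : ℕ}
    (ℓ : Fin n → MvPolynomial (Fin k) K)
    (hhom : ∀ i, (ℓ i).IsHomogeneous 1)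
    (hne : ∀ i, ℓ i ≠ 0)
    (hprop : ∀ i j : Fin n, i ≠ j → ∀ c : K, ℓ i ≠ c • ℓ j)
    (f : Fin n → Fin n → MvPolynomial (Fin k) K)
    (hf : ∀ i j, f i j = ∏ u ∈ (Finset.univ \ {i, j}), ℓ u)
    (g : Fin n → MvPolynomial (Fin k) K)
    (hg : ∀ i, g i = ∏ u ∈ (Finset.univ \ {i}), ℓ u)
    (α β : Fin n → Fin n → K)
    (hsyz : ∑ p ∈ Finset.univ.filter (fun p : Fin n × Fin n => p.1 < p.2),
      (α p.1 p.2 • ℓ p.1 + β p.1 p.2 • ℓ p.2) * f p.1 p.2 = 0) :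
    (∑ i : Fin n,
        ((∑ u ∈ Finset.univ.filter (· < i), α u i)
          + ∑ v ∈ Finset.univ.filter (i < ·), β i v) • g i = 0)
    ∧ ∀ i : Fin n,
        (∑ u ∈ Finset.univ.filter (· < i), α u i)
          + ∑ v ∈ Finset.univ.filter (i < ·), β i v = 0 :=
  stmt12_general ℓ hhom hne hprop f hf g hg α β hsyz
end
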